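/- Let 𝒜 ⊂ M(N,M) and ℬ ⊂ M(M,N) be finite sets of matrices such that for every sequence {Aₙ ∈ 𝒜} there exist a natural number k and matrices B₁,…,B_k ∈ ℬ with ‖A_kB_k⋯A₁B₁‖ < 1. Then there exist constants C > 0 and λ ∈ (0,1) such that for every sequence {Aₙ ∈ 𝒜} there is a sequence {Bₙ ∈ ℬ} with ‖AₙBₙ⋯A₁B₁‖ ≤ Cλⁿ for all n ≥ 1. -/
import Mathlib

def prodAB {N M : ℕ} (A : ℕ → Matrix (Fin N) (Fin M) ℝ)
    (B : ℕ → Matrix (Fin M) (Fin N) ℝ) : ℕ → Matrix (Fin N) (Fin N) ℝ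
  | 0 => 1
  | n + 1 => (A (n + 1) * B (n + 1)) * prodAB A B n

lemma prodAB_congr {N M : ℕ} {A A' : ℕ → Matrix (Fin N) (Fin M) ℝ}
    {B B' : ℕ → Matrix (Fin M) (Fin N) ℝ} :
    ∀ k, (∀ i, 1 ≤ i → i ≤ k → A i = A' i) → (∀ i, 1 ≤ i → i ≤ k → B i = B' i) →
    prodAB A B k = prodAB A' B' k
  | 0, _, _ => rfl
  | (k+1), hA, hB => by
    simp only [prodAB]
    rw [hA (k+1) (by omega) le_rfl, hB (k+1) (by omega) le_rfl,
      prodAB_congr k (fun i h1 h2 => hA i h1 (by omega)) (fun i h1 h2 => hB i h1 (by omega))]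

lemma prodAB_add {N M : ℕ} (A : ℕ → Matrix (Fin N) (Fin M) ℝ)
    (B : ℕ → Matrix (Fin M) (Fin N) ℝ) (s : ℕ) :
    ∀ k, prodAB A B (s + k) =
      prodAB (fun n => A (n + s)) (fun n => B (n + s)) k * prodAB A B s
  | 0 => by simp [prodAB]
  | (k+1) => by
    have h : s + (k+1) = (s + k) + 1 := rfl
    rw [h]
    show (A (s + k + 1) * B (s + k + 1)) * prodAB A B (s + k) = _
    rw [prodAB_add A B s k]
    show _ = ((A (k + 1 + s) * B (k + 1 + s)) *
      prodAB (fun n => A (n+s)) (fun n => B (n+s)) k) * prodAB A B s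
    have h2 : k + 1 + s = s + k + 1 := by omega
    rw [h2, mul_assoc]

lemma nu_prodAB_le {N M : ℕ} (ν : Matrix (Fin N) (Fin N) ℝ → ℝ)
    (hnonneg : ∀ X, 0 ≤ ν X) (hsub : ∀ X Y, ν (X * Y) ≤ ν X * ν Y)
    (A : ℕ → Matrix (Fin N) (Fin M) ℝ) (B : ℕ → Matrix (Fin M) (Fin N) ℝ)
    (E D : ℝ) (hE : ν 1 ≤ E) (hD1 : 0 ≤ D)
    (hD : ∀ n, ν (A n * B n) ≤ D) :
    ∀ k, ν (prodAB A B k) ≤ E * D ^ k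
  | 0 => by simpa [prodAB] using hE
  | (k+1) => by
    calc ν (prodAB A B (k+1)) ≤ ν (A (k+1) * B (k+1)) * ν (prodAB A B k) := hsub _ _
    _ ≤ D * (E * D ^ k) := mul_le_mul (hD _)
        (nu_prodAB_le ν hnonneg hsub A B E D hE hD1 hD k) (hnonneg _) hD1
    _ = E * D ^ (k+1) := by ring

lemma koenig {α : Type*} [Finite α] [Nonempty α] (Bad : (ℕ → α) → ℕ → Prop)
    (hdep : ∀ A A' k, (∀ i, 1 ≤ i → i ≤ k → A i = A' i) → Bad A k → Bad A' k)
    (hanti : ∀ A k k', k ≤ k' → Bad A k' → Bad A k)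
    (h : ∀ K, ∃ A, Bad A K) :
    ∃ A : ℕ → α, ∀ K, Bad A K := by
  classical
  let Ext : (ℕ → α) → ℕ → Prop :=
    fun w m => ∀ K, ∃ A, (∀ i, 1 ≤ i → i ≤ m → A i = w i) ∧ Bad A K
  have ext0 : ∀ w, Ext w 0 := fun w K => by
    obtain ⟨A, hA⟩ := h K; exact ⟨A, fun i h1 h2 => by omega, hA⟩
  have step : ∀ w m, Ext w m → ∃ a, Ext (Function.update w (m+1) a) (m+1) := by
    intro w m hw
    choose A hA1 hA2 using hw
    obtain ⟨a, ha⟩ := Finite.exists_infinite_fiber (fun K => A K (m+1))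
    refine ⟨a, fun K => ?_⟩
    obtain ⟨K', hK'mem, hK'⟩ := (Set.infinite_coe_iff.mp ha).exists_gt K
    refine ⟨A K', ?_, hanti _ _ _ hK'.le (hA2 K')⟩
    intro i h1 h2
    rcases Nat.lt_or_ge i (m+1) with hi | hi
    · rw [Function.update_of_ne (by omega), hA1 K' i h1 (by omega)]
    · have hi2 : i = m + 1 := by omega
      subst hi2
      rw [Function.update_self]
      simpa using hK'mem
  let W : ∀ m : ℕ, {w : ℕ → α // Ext w m} := fun m =>
    Nat.rec ⟨fun _ => Classical.arbitrary α, ext0 _⟩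
      (fun m ih => ⟨Function.update ih.1 (m+1) (step ih.1 m ih.2).choose,
        (step ih.1 m ih.2).choose_spec⟩) m
  have agree : ∀ m m', m ≤ m' → ∀ i, i ≤ m → (W m').1 i = (W m).1 i := by
    intro m m' h
    induction m', h using Nat.le_induction with
    | base => intro i _; rfl
    | succ m' hm ih =>
      intro i hi
      have : (W (m'+1)).1 i = (W m').1 i := by
        show Function.update (W m').1 (m'+1) _ i = (W m').1 i
        rw [Function.update_of_ne (by omega)]
      rw [this, ih i hi]
  refine ⟨fun i => (W i).1 i, fun K => ?_⟩
  obtain ⟨A, hA1, hA2⟩ := (W K).2 K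
  refine hdep A _ K (fun i h1 h2 => ?_) hA2
  rw [hA1 i h1 h2, agree i K h2 i le_rfl]
theorem stmt_3 (N M : ℕ) (ν : Matrix (Fin N) (Fin N) ℝ → ℝ)
    (hnonneg : ∀ X, 0 ≤ ν X) (hzero : ∀ X, ν X = 0 ↔ X = 0)
    (htri : ∀ X Y, ν (X + Y) ≤ ν X + ν Y)
    (hsmul : ∀ (c : ℝ) (X), ν (c • X) = |c| * ν X)
    (hsub : ∀ X Y, ν (X * Y) ≤ ν X * ν Y)
    (𝒜 : Finset (Matrix (Fin N) (Fin M) ℝ)) (ℬ : Finset (Matrix (Fin M) (Fin N) ℝ))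
    (hyp : ∀ A : ℕ → Matrix (Fin N) (Fin M) ℝ, (∀ n, A n ∈ 𝒜) →
      ∃ k, 1 ≤ k ∧ ∃ B : ℕ → Matrix (Fin M) (Fin N) ℝ, (∀ n, B n ∈ ℬ) ∧
        ν (prodAB A B k) < 1) :
    ∃ C > 0, ∃ lam : ℝ, 0 < lam ∧ lam < 1 ∧
      ∀ A : ℕ → Matrix (Fin N) (Fin M) ℝ, (∀ n, A n ∈ 𝒜) →
        ∃ B : ℕ → Matrix (Fin M) (Fin N) ℝ, (∀ n, B n ∈ ℬ) ∧
          ∀ n, 1 ≤ n → ν (prodAB A B n) ≤ C * lam ^ n := by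
  classical
  by_cases hA0 : ∃ a, a ∈ 𝒜
  swap
  · exact ⟨1, one_pos, 1/2, by norm_num, by norm_num,
      fun A hA => absurd ⟨A 0, hA 0⟩ hA0⟩
  obtain ⟨a₀, ha₀⟩ := hA0
  obtain ⟨k₀, hk₀, B₀, hB₀, hν₀⟩ := hyp (fun _ => a₀) (fun _ => ha₀)
  obtain ⟨b₀, hb₀⟩ : ∃ b, b ∈ ℬ := ⟨B₀ 0, hB₀ 0⟩
  set α := {x // x ∈ 𝒜} with hα
  haveI : Nonempty α := ⟨⟨a₀, ha₀⟩⟩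
  haveI : Fintype α := FinsetCoe.fintype 𝒜
  set Good : (ℕ → Matrix (Fin N) (Fin M) ℝ) → ℕ → Prop := fun A k =>
    ∃ B : ℕ → Matrix (Fin M) (Fin N) ℝ, (∀ n, B n ∈ ℬ) ∧ ν (prodAB A B k) < 1
    with hGooddef
  have hGood_congr : ∀ (A A' : ℕ → Matrix (Fin N) (Fin M) ℝ) k,
      (∀ i, 1 ≤ i → i ≤ k → A i = A' i) → Good A k → Good A' k := by
    rintro A A' k hagree ⟨B, hB, hν⟩
    exact ⟨B, hB, by
      rwa [prodAB_congr k hagree (fun _ _ _ => rfl)] at hν⟩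
  -- uniform bound K on the length of a good prefix
  have hK : ∃ K, ∀ w : ℕ → α, ∃ k, 1 ≤ k ∧ k ≤ K ∧ Good (fun n => (w n).1) k := by
    by_contra hcon
    push_neg at hcon
    obtain ⟨w, hw⟩ := koenig (α := α) (fun (w : ℕ → α) k => ∀ j, 1 ≤ j → j ≤ k → ¬ Good (fun n => (w n).1) j)
      (by
        intro A A' k hag hbad j h1 h2 hg
        exact hbad j h1 h2 (hGood_congr _ _ j
          (fun i hi1 hi2 => by rw [hag i hi1 (by omega)]) hg))
      (fun A k k' hkk hbad j h1 h2 => hbad j h1 (by omega))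
      (by
        intro K
        obtain ⟨w, hw⟩ := hcon K
        exact ⟨w, fun j h1 h2 hg => hw j h1 h2 hg⟩)
    obtain ⟨k, hk1, B, hB, hν⟩ := hyp (fun n => (w n).1) (fun n => (w n).2)
    exact hw k k hk1 le_rfl ⟨B, hB, hν⟩
  obtain ⟨K, hKspec⟩ := hK
  have hK1 : 1 ≤ K := by
    obtain ⟨k, h1, h2, _⟩ := hKspec (fun _ => ⟨a₀, ha₀⟩)
    omega
  -- uniform contraction factor lam1
  set ext : (Fin K → α) → ℕ → α :=
    fun f n => if h : n - 1 < K then f ⟨n - 1, h⟩ else ⟨a₀, ha₀⟩ with hextdef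
  have hchoice : ∀ f : Fin K → α, ∃ k, ∃ B : ℕ → Matrix (Fin M) (Fin N) ℝ,
      1 ≤ k ∧ k ≤ K ∧ (∀ n, B n ∈ ℬ) ∧
      ν (prodAB (fun n => (ext f n).1) B k) < 1 := by
    intro f
    obtain ⟨k, h1, h2, B, hB, hν⟩ := hKspec (ext f)
    exact ⟨k, B, h1, h2, hB, hν⟩
  choose kf Bf hkf1 hkf2 hBf hνf using hchoice
  haveI : Nonempty (Fin K → α) := inferInstance
  obtain ⟨lam0, hlam0bound, hlam0lt⟩ : ∃ l : ℝ, (∀ f : Fin K → α,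
      ν (prodAB (fun n => (ext f n).1) (Bf f) (kf f)) ≤ l) ∧ l < 1 := by
    refine ⟨Finset.univ.sup' Finset.univ_nonempty
        (fun f : Fin K → α => ν (prodAB (fun n => (ext f n).1) (Bf f) (kf f))), ?_, ?_⟩
    · intro f
      exact Finset.le_sup'
        (f := fun f : Fin K → α => ν (prodAB (fun n => (ext f n).1) (Bf f) (kf f)))
        (Finset.mem_univ f)
    · rw [Finset.sup'_lt_iff]
      exact fun f _ => hνf f
  set lam1 := max lam0 (1/2) with hlam1def
  have hlam1lt : lam1 < 1 := max_lt hlam0lt (by norm_num)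
  have hlam1ge : (1:ℝ)/2 ≤ lam1 := le_max_right _ _
  have hlam1pos : (0:ℝ) < lam1 := by linarith
  -- the one-block step lemma
  have hstep : ∀ w : ℕ → α, ∃ k, ∃ B : ℕ → Matrix (Fin M) (Fin N) ℝ,
      1 ≤ k ∧ k ≤ K ∧ (∀ n, B n ∈ ℬ) ∧
      ν (prodAB (fun n => (w n).1) B k) ≤ lam1 := by
    intro w
    set f : Fin K → α := fun i => w ((i : ℕ) + 1) with hf
    refine ⟨kf f, Bf f, hkf1 f, hkf2 f, hBf f, ?_⟩
    have heq : prodAB (fun n => (w n).1) (Bf f) (kf f)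
        = prodAB (fun n => (ext f n).1) (Bf f) (kf f) := by
      refine prodAB_congr _ (fun i h1 h2 => ?_) (fun _ _ _ => rfl)
      have hi : i - 1 < K := by have := hkf2 f; omega
      have : ext f i = w i := by
        rw [hextdef]
        simp only [dif_pos hi, hf]
        congr 1
        omega
      rw [this]
    rw [heq]
    exact le_trans (hlam0bound f) (le_max_left _ _)
  -- global constants
  obtain ⟨E, hE1, hE⟩ : ∃ E : ℝ, 1 ≤ E ∧ ν 1 ≤ E :=
    ⟨max (ν 1) 1, le_max_right _ _, le_max_left _ _⟩
  have hpairs : (𝒜 ×ˢ ℬ).Nonempty := ⟨(a₀, b₀), Finset.mem_product.2 ⟨ha₀, hb₀⟩⟩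
  obtain ⟨D, hD1, hD⟩ : ∃ D : ℝ, 1 ≤ D ∧ ∀ a ∈ 𝒜, ∀ b ∈ ℬ, ν (a * b) ≤ D := by
    refine ⟨max ((𝒜 ×ˢ ℬ).sup' hpairs (fun p => ν (p.1 * p.2))) 1, le_max_right _ _, ?_⟩
    intro a ha b hb
    refine le_trans ?_ (le_max_left _ _)
    exact Finset.le_sup' (f := fun p : Matrix (Fin N) (Fin M) ℝ × Matrix (Fin M) (Fin N) ℝ =>
      ν (p.1 * p.2)) (b := (a, b)) (Finset.mem_product.2 ⟨ha, hb⟩)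
  have hK0 : (0:ℝ) < (K:ℝ) := by exact_mod_cast hK1
  refine ⟨E * E * D ^ K / lam1,
    div_pos (mul_pos (mul_pos (by linarith) (by linarith)) (pow_pos (by linarith) K)) hlam1pos,
    lam1 ^ (1/(K:ℝ)), Real.rpow_pos_of_pos hlam1pos _,
    Real.rpow_lt_one hlam1pos.le hlam1lt (by positivity), ?_⟩
  intro A hA
  set w : ℕ → α := fun n => ⟨A n, hA n⟩ with hw
  choose kk BB hkk1 hkk2 hBB hνB using fun s => hstep (fun n => w (n + s))
  set s : ℕ → ℕ := fun m => Nat.rec 0 (fun _ sm => sm + kk sm) m with hsdef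
  have hs0 : s 0 = 0 := rfl
  have hssucc : ∀ m, s (m+1) = s m + kk (s m) := fun m => rfl
  have hsmono : Monotone s := monotone_nat_of_le_succ (fun m => by
    rw [hssucc]; omega)
  have hsK : ∀ m, s (m+1) ≤ s m + K := fun m => by
    rw [hssucc]; have := hkk2 (s m); omega
  have hsge : ∀ m, m ≤ s m := by
    intro m; induction m with
    | zero => omega
    | succ m ih => rw [hssucc]; have := hkk1 (s m); omega
  have hsle : ∀ m, s m ≤ K * m := by
    intro m; induction m with
    | zero => simp [hs0]
    | succ m ih => rw [hssucc]; have := hkk2 (s m); nlinarith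
  have hex : ∀ n, ∃ m, n ≤ s (m+1) := fun n => ⟨n, by have := hsge (n+1); omega⟩
  set B : ℕ → Matrix (Fin M) (Fin N) ℝ :=
    fun n => BB (s (Nat.find (hex n))) (n - s (Nat.find (hex n))) with hBdef
  refine ⟨B, fun n => hBB _ _, ?_⟩
  have hidx : ∀ m j, 1 ≤ j → j ≤ kk (s m) → Nat.find (hex (s m + j)) = m := by
    intro m j h1 h2
    refine (Nat.find_eq_iff (hex (s m + j))).mpr ⟨?_, ?_⟩
    · rw [hssucc]; omega
    · intro m' hm'
      have h3 : s (m'+1) ≤ s m := hsmono hm'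
      omega
  have hBblock : ∀ m j, 1 ≤ j → j ≤ kk (s m) → B (s m + j) = BB (s m) j := by
    intro m j h1 h2
    rw [hBdef]
    simp only
    rw [hidx m j h1 h2]
    have h4 : s m + j - s m = j := by omega
    rw [h4]
  have hblocks : ∀ m, ν (prodAB A B (s m)) ≤ E * lam1 ^ m := by
    intro m
    induction m with
    | zero =>
      rw [hs0]
      simpa [prodAB] using hE
    | succ m ih =>
      rw [hssucc, prodAB_add]
      have hAg : prodAB (fun n => A (n + s m)) (fun n => B (n + s m)) (kk (s m))
          = prodAB (fun n => (w (n + s m)).1) (BB (s m)) (kk (s m)) := by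
        refine prodAB_congr _ (fun i h1 h2 => rfl) (fun i h1 h2 => ?_)
        have h3 : i + s m = s m + i := by omega
        show B (i + s m) = BB (s m) i
        rw [h3]
        exact hBblock m i h1 h2
      calc ν (prodAB (fun n => A (n + s m)) (fun n => B (n + s m)) (kk (s m))
              * prodAB A B (s m))
          ≤ ν (prodAB (fun n => A (n + s m)) (fun n => B (n + s m)) (kk (s m)))
            * ν (prodAB A B (s m)) := hsub _ _
        _ ≤ lam1 * (E * lam1 ^ m) := mul_le_mul
            (by rw [hAg]; exact hνB (s m)) ih (hnonneg _) hlam1pos.le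
        _ = E * lam1 ^ (m+1) := by ring
  intro n hn
  set m := Nat.find (hex n) with hm
  have h1 : n ≤ s (m+1) := Nat.find_spec (hex n)
  have h2 : s m < n := by
    rcases Nat.eq_zero_or_pos m with h | h
    · rw [h, hs0]; omega
    · have hmin := Nat.find_min (hex n) (m := m - 1) (by rw [← hm]; omega)
      have hmm : m - 1 + 1 = m := by omega
      rw [hmm] at hmin
      omega
  have h3 : n - s m ≤ K := by have := hsK m; omega
  have hdecomp : prodAB A B n
      = prodAB (fun j => A (j + s m)) (fun j => B (j + s m)) (n - s m) * prodAB A B (s m) := by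
    have hnn : n = s m + (n - s m) := by omega
    conv_lhs => rw [hnn]
    exact prodAB_add A B (s m) (n - s m)
  have hpart : ν (prodAB (fun j => A (j + s m)) (fun j => B (j + s m)) (n - s m))
      ≤ E * D ^ (n - s m) :=
    nu_prodAB_le ν hnonneg hsub _ _ E D hE (by linarith)
      (fun j => hD _ (hA _) _ (hBB _ _)) _
  have hDpow : D ^ (n - s m) ≤ D ^ K := pow_le_pow_right₀ (by linarith) h3
  have hmn : (n:ℝ) ≤ (K:ℝ) * ((m:ℝ)+1) := by
    have := le_trans h1 (hsle (m+1))
    exact_mod_cast this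
  have hexp : (1/(K:ℝ)) * (n:ℝ) - 1 ≤ (m:ℝ) := by
    have h4 : (n:ℝ)/(K:ℝ) ≤ (m:ℝ)+1 := by
      rw [div_le_iff₀ hK0]; linarith
    have h5 : (1/(K:ℝ)) * (n:ℝ) = (n:ℝ)/(K:ℝ) := by ring
    linarith
  have hkey : lam1 ^ m ≤ (lam1 ^ (1/(K:ℝ))) ^ n / lam1 := by
    have e1 : (lam1 ^ (1/(K:ℝ))) ^ n = lam1 ^ ((1/(K:ℝ)) * (n:ℝ)) := by
      rw [Real.rpow_mul hlam1pos.le, Real.rpow_natCast]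
    have e2 : lam1 ^ m = lam1 ^ ((m:ℝ)) := (Real.rpow_natCast _ _).symm
    rw [e1, e2, div_eq_mul_inv, ← Real.rpow_neg_one lam1, ← Real.rpow_add hlam1pos]
    exact Real.rpow_le_rpow_of_exponent_ge hlam1pos hlam1lt.le (by linarith)
  calc ν (prodAB A B n)
      ≤ ν (prodAB (fun j => A (j + s m)) (fun j => B (j + s m)) (n - s m))
        * ν (prodAB A B (s m)) := by rw [hdecomp]; exact hsub _ _
    _ ≤ (E * D ^ K) * (E * ((lam1 ^ (1/(K:ℝ))) ^ n / lam1)) := by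
        refine mul_le_mul (le_trans hpart ?_) (le_trans (hblocks m) ?_)
          (hnonneg _) ?_
        · exact mul_le_mul_of_nonneg_left hDpow (by linarith)
        · exact mul_le_mul_of_nonneg_left hkey (by linarith)
        · positivity
    _ = E * E * D ^ K / lam1 * (lam1 ^ (1/(K:ℝ))) ^ n := by ring
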